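/- Let M be a matroid and let C₁, C₂ be distinct circuits of M. Then C₁, C₂ form a modular pair if and only if there exist a basis B of M and distinct elements e₁, e₂ ∈ E \ B such that C₁ = C(B, e₁) and C₂ = C(B, e₂), where C(B, e) denotes the fundamental circuit of e with respect to B. -/

import Mathlib

open Set

variable {α : Type*}

/-- A circuit of a matroid: a minimal dependent set. -/
def Matroid.IsCircuit' (M : Matroid α) (C : Set α) : Prop :=
  M.Dep C ∧ ∀ D, D ⊂ C → ¬ M.Dep D

/-- The rank (in `ℕ∞`) of a set in a matroid: the supremum of the cardinalities
of independent subsets. -/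
noncomputable def Matroid.rk' (M : Matroid α) (X : Set α) : ℕ∞ :=
  ⨆ I : {I : Set α // M.Indep I ∧ I ⊆ X}, (I : Set α).encard

/-- Two distinct circuits `C₁, C₂` form a modular pair if `C₁ ∪ C₂` does not
properly contain the union of two distinct circuits of `M`. -/
def Matroid.ModularPairOfCircuits (M : Matroid α) (C₁ C₂ : Set α) : Prop :=
  C₁ ≠ C₂ ∧ ∀ D₁ D₂, M.IsCircuit' D₁ → M.IsCircuit' D₂ → D₁ ≠ D₂ →
    ¬ (D₁ ∪ D₂ ⊂ C₁ ∪ C₂)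

/-!
Everything rests on the uniqueness of fundamental circuits. If `C₁ ⊆ B + e₁` and
`C₂ ⊆ B + e₂` with `B` independent, and `D₁ ≠ D₂` are circuits inside `B + e₁ + e₂`,
eliminating `e₂` from `D₁ ∪ D₂` leaves a circuit inside `B + e₁`, which can only be `C₁`;
likewise `C₂ ⊆ D₁ ∪ D₂`, so no union of two circuits lies properly inside `C₁ ∪ C₂`.

Conversely, for a modular pair pick `f ∈ C₁ \ C₂` and a basis `I ⊇ C₁ - f` of `C₁ ∪ C₂`.
If three elements of `C₁ ∪ C₂` lay outside `I`, the fundamental circuits of two of them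
would be distinct with a union missing the third. Hence `C₁ ∪ C₂ ⊆ I + f + e₂` for any
`e₂ ∈ C₂ \ I`, and any base `B` with `B ∩ (C₁ ∪ C₂) = I` does the job.
-/

namespace Matroid

variable {M : Matroid α} {B I C C₁ C₂ D₁ D₂ : Set α} {e f g : α}

lemma isCircuit'_iff : M.IsCircuit' C ↔ M.IsCircuit C :=
  minimal_iff_forall_ssubset.symm

lemma modularPairOfCircuits_iff : M.ModularPairOfCircuits C₁ C₂ ↔ C₁ ≠ C₂ ∧
    ∀ D₁ D₂, M.IsCircuit D₁ → M.IsCircuit D₂ → D₁ ≠ D₂ → ¬ D₁ ∪ D₂ ⊂ C₁ ∪ C₂ := by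
  simp only [ModularPairOfCircuits, isCircuit'_iff]

lemma IsCircuit.subset_union_of_subset_insert_insert (hC : M.IsCircuit C) (hB : M.Indep B)
    (hCB : C ⊆ insert e B) (hD₁ : M.IsCircuit D₁) (hD₂ : M.IsCircuit D₂) (hne : D₁ ≠ D₂)
    (hD : D₁ ∪ D₂ ⊆ insert e (insert f B)) : C ⊆ D₁ ∪ D₂ := by
  obtain ⟨D, hDs, hDc⟩ := hD₁.elimination hD₂ hne f
  have hDB : D ⊆ insert e B := (hDs.trans (sdiff_subset_sdiff_left hD)).trans (by simp)
  rw [hC.eq_fundCircuit_of_subset hB hCB, ← hDc.eq_fundCircuit_of_subset hB hDB]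
  exact hDs.trans sdiff_subset

lemma modularPairOfCircuits_of_subset_insert (h₁ : M.IsCircuit C₁) (h₂ : M.IsCircuit C₂)
    (hne : C₁ ≠ C₂) (hB : M.Indep B) (hC₁ : C₁ ⊆ insert e B) (hC₂ : C₂ ⊆ insert f B) :
    M.ModularPairOfCircuits C₁ C₂ := by
  refine modularPairOfCircuits_iff.2 ⟨hne, fun D₁ D₂ hD₁ hD₂ hD hss ↦ hss.not_subset ?_⟩
  have hef : D₁ ∪ D₂ ⊆ insert e (insert f B) := hss.subset.trans (by grind)
  have hfe : D₁ ∪ D₂ ⊆ insert f (insert e B) := insert_comm e f B ▸ hef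
  exact union_subset (h₁.subset_union_of_subset_insert_insert hB hC₁ hD₁ hD₂ hD hef)
    (h₂.subset_union_of_subset_insert_insert hB hC₂ hD₁ hD₂ hD hfe)

lemma ModularPairOfCircuits.diff_subset_pair (hmod : M.ModularPairOfCircuits C₁ C₂)
    (hI : M.IsBasis I (C₁ ∪ C₂)) (hf : f ∈ (C₁ ∪ C₂) \ I) (hg : g ∈ (C₁ ∪ C₂) \ I)
    (hfg : f ≠ g) : (C₁ ∪ C₂) \ I ⊆ {f, g} := by
  rintro z ⟨hzU, hzI⟩
  by_contra hz
  have hcirc {x} (hx : x ∈ (C₁ ∪ C₂) \ I) : M.IsCircuit (M.fundCircuit x I) :=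
    hI.indep.fundCircuit_isCircuit (hI.subset_closure hx.1) hx.2
  have hsub : M.fundCircuit f I ∪ M.fundCircuit g I ⊆ insert f (insert g I) :=
    union_subset_union (M.fundCircuit_subset_insert f I) (M.fundCircuit_subset_insert g I)
      |>.trans (by grind)
  refine (modularPairOfCircuits_iff.1 hmod).2 _ _ (hcirc hf) (hcirc hg) (fun h ↦ ?_) ?_
  · exact (M.fundCircuit_subset_insert g I (h ▸ M.mem_fundCircuit f I)).elim hfg hf.2
  refine (hsub.trans (insert_subset hf.1 (insert_subset hg.1 hI.subset))).ssubset_of_not_subset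
    fun h ↦ ?_
  obtain rfl | rfl | hzI' := hsub (h hzU)
  exacts [hz (.inl rfl), hz (.inr rfl), hzI hzI']

lemma ModularPairOfCircuits.exists_isBase_subset_insert (hmod : M.ModularPairOfCircuits C₁ C₂)
    (h₁ : M.IsCircuit C₁) (h₂ : M.IsCircuit C₂) :
    ∃ B e₁ e₂, M.IsBase B ∧ e₁ ∈ M.E \ B ∧ e₂ ∈ M.E \ B ∧ e₁ ≠ e₂ ∧
      C₁ ⊆ insert e₁ B ∧ C₂ ⊆ insert e₂ B := by
  obtain ⟨f, hf₁, hf₂⟩ := not_subset.1 fun h ↦ hmod.1 (h₁.eq_of_subset_isCircuit h₂ h)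
  obtain ⟨I, hI, hC₁I⟩ := (h₁.sdiff_singleton_indep hf₁).subset_isBasis_of_subset
    (sdiff_subset.trans subset_union_left) (union_subset h₁.subset_ground h₂.subset_ground)
  have hfI : f ∉ I := fun hfI ↦ h₁.not_indep <| hI.indep.subset fun x hx ↦
    (em (x = f)).elim (· ▸ hfI) fun hxf ↦ hC₁I ⟨hx, hxf⟩
  obtain ⟨e₂, he₂, he₂I⟩ := not_subset.1 fun h ↦ h₂.not_indep (hI.indep.subset h)
  have hfe₂ : f ≠ e₂ := fun h ↦ hf₂ (h ▸ he₂)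
  have hpair := hmod.diff_subset_pair hI ⟨.inl hf₁, hfI⟩ ⟨.inr he₂, he₂I⟩ hfe₂
  obtain ⟨B, hB, hIB⟩ := hI.exists_isBase
  have hIB' : I ⊆ B := hIB ▸ inter_subset_left
  have hnotB {x} (hx : x ∈ C₁ ∪ C₂) (hxI : x ∉ I) : x ∉ B := fun hxB ↦ hxI (hIB ▸ ⟨hxB, hx⟩)
  refine ⟨B, f, e₂, hB, ⟨h₁.subset_ground hf₁, hnotB (.inl hf₁) hfI⟩,
    ⟨h₂.subset_ground he₂, hnotB (.inr he₂) he₂I⟩, hfe₂, fun x hx ↦ ?_, fun x hx ↦ ?_⟩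
  · exact (em (x = f)).imp id fun hxf ↦ hIB' (hC₁I ⟨hx, hxf⟩)
  · by_cases hxI : x ∈ I
    · exact .inr (hIB' hxI)
    · obtain rfl | rfl := hpair ⟨.inr hx, hxI⟩
      · exact absurd hx hf₂
      · exact .inl rfl

end Matroid

theorem modularPair_iff_fundCircuits_general (M : Matroid α)
    (C₁ C₂ : Set α) (h₁ : M.IsCircuit' C₁) (h₂ : M.IsCircuit' C₂) (hne : C₁ ≠ C₂) :
    M.ModularPairOfCircuits C₁ C₂ ↔
      ∃ B e₁ e₂, M.IsBase B ∧ e₁ ∈ M.E \ B ∧ e₂ ∈ M.E \ B ∧ e₁ ≠ e₂ ∧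
        C₁ ⊆ insert e₁ B ∧ C₂ ⊆ insert e₂ B := by
  rw [Matroid.isCircuit'_iff] at h₁ h₂
  refine ⟨fun hmod ↦ hmod.exists_isBase_subset_insert h₁ h₂, ?_⟩
  rintro ⟨B, e₁, e₂, hB, -, -, -, hC₁, hC₂⟩
  exact Matroid.modularPairOfCircuits_of_subset_insert h₁ h₂ hne hB.indep hC₁ hC₂

/-- Distinct circuits `C₁, C₂` of a matroid form a modular pair iff they are the
fundamental circuits `C(B, e₁)`, `C(B, e₂)` of two distinct elements
`e₁, e₂ ∈ E \ B` with respect to a common basis `B`.  (The fundamental circuit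
`C(B, e)` is the unique circuit contained in `B ∪ {e}`.) -/
theorem modularPair_iff_fundCircuits (M : Matroid α) (hE : M.E.Finite)
    (C₁ C₂ : Set α) (h₁ : M.IsCircuit' C₁) (h₂ : M.IsCircuit' C₂) (hne : C₁ ≠ C₂) :
    M.ModularPairOfCircuits C₁ C₂ ↔
      ∃ B e₁ e₂, M.IsBase B ∧ e₁ ∈ M.E \ B ∧ e₂ ∈ M.E \ B ∧ e₁ ≠ e₂ ∧
        C₁ ⊆ insert e₁ B ∧ C₂ ⊆ insert e₂ B :=
  modularPair_iff_fundCircuits_general M C₁ C₂ h₁ h₂ hne
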